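/- arXiv:cs/0610142 — 3 statements merged into one kernel-verified Lean document; each statement's English description precedes it below -/
import Mathlib

section
/- Let p_X be a pmf on a finite set X and μ_X a nonnegative function on X with μ_X(i) ≥ p_X(i) for all i. Then for any pmf (type) q_X on X realizable as the empirical type of a sequence of length n, the probability under the iid p_X measure that an n-length sequence has empirical type q_X is at most 2^{-n D(q_X || μ_X)}, where D(q_X || μ_X) := Σ_i q_X(i) log₂(q_X(i)/μ_X(i)). -/
/-!
On the type class `T_q`, a sequence `x` contains each symbol `i` exactly `n q(i)` times, so
`μⁿ(x) = ∏ᵢ μ(i)^{n q(i)} = qⁿ(x) · 2^{-n D(q ‖ μ)}`. Since `p ≤ μ` pointwise,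
`pⁿ(T_q) ≤ 2^{-n D(q ‖ μ)} qⁿ(T_q) ≤ 2^{-n D(q ‖ μ)}`.
-/

open Finset

theorem Fintype.prod_comp_eq_prod_pow_card_filter {ι κ M : Type*} [Fintype ι] [Fintype κ]
    [DecidableEq κ] [CommMonoid M] (f : κ → M) (x : ι → κ) :
    ∏ t, f (x t) = ∏ i, f i ^ #{t | x t = i} := by
  simp [← Finset.prod_fiberwise' univ x f]

theorem Real.rpow_eq_rpow_mul_two_rpow_neg_mul_logb {a b : ℝ} (ha : 0 < a) (hb : 0 < b) (c : ℝ) :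
    b ^ c = a ^ c * 2 ^ (-c * logb 2 (a / b)) := by
  have hab := div_pos ha hb
  have h_two_rpow : (2 : ℝ) ^ (-c * logb 2 (a / b)) = (b / a) ^ c := by
    rw [mul_comm, rpow_mul zero_le_two, rpow_logb two_pos (by norm_num) hab, rpow_neg hab.le,
      ← inv_rpow hab.le, inv_div]
  rw [h_two_rpow, div_rpow hb.le ha.le, mul_div_cancel₀ _ (rpow_pos_of_pos ha c).ne']

noncomputable def relEntropyBits {X : Type*} [Fintype X] (q μ : X → ℝ) : ℝ :=
  ∑ i, q i * Real.logb 2 (q i / μ i)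

theorem prod_comp_eq_prod_comp_mul_two_rpow_neg_relEntropyBits {ι X : Type*} [Fintype ι]
    [Fintype X] [DecidableEq X] {q μ : X → ℝ} (hq0 : ∀ i, 0 ≤ q i)
    (hqμ : ∀ i, 0 < q i → 0 < μ i) {n : ℝ} {x : ι → X}
    (hx : ∀ i, (#{t | x t = i} : ℝ) = n * q i) :
    ∏ t, μ (x t) = (∏ t, q (x t)) * 2 ^ (-n * relEntropyBits q μ) := by
  rw [Fintype.prod_comp_eq_prod_pow_card_filter μ x, Fintype.prod_comp_eq_prod_pow_card_filter q x,
    relEntropyBits, mul_sum, Real.rpow_sum_of_pos two_pos, ← prod_mul_distrib]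
  refine prod_congr rfl fun i _ => ?_
  rcases (hq0 i).eq_or_lt with hqi | hqi
  · have hc : #{t | x t = i} = 0 := by
      have := hx i
      rw [← hqi, mul_zero] at this
      exact_mod_cast this
    simp [hc, ← hqi]
  · rw [← Real.rpow_natCast, ← Real.rpow_natCast, ← mul_assoc, neg_mul, ← hx i]
    exact Real.rpow_eq_rpow_mul_two_rpow_neg_mul_logb hqi (hqμ i hqi) _

theorem type_class_prob_le_of_dominating_general
    {X : Type} [Fintype X] [DecidableEq X]
    (pX μX qX : X → ℝ) (n : ℕ)
    (hp0 : ∀ i, 0 ≤ pX i)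
    (hdom : ∀ i, pX i ≤ μX i)
    (hq0 : ∀ i, 0 ≤ qX i) (hq1 : ∑ i, qX i = 1)
    (hqμ : ∀ i, 0 < qX i → 0 < μX i) :
    ∑ x : Fin n → X,
        (if ∀ i, ((Finset.univ.filter (fun t => x t = i)).card : ℝ) = n * qX i
          then ∏ t, pX (x t) else 0)
      ≤ 2 ^ (-(n : ℝ) * ∑ i, qX i * Real.logb 2 (qX i / μX i)) := by
  calc
    _ ≤ ∑ x : Fin n → X, (∏ t, qX (x t)) * 2 ^ (-(n : ℝ) * relEntropyBits qX μX) := by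
      refine sum_le_sum fun x _ => ?_
      split_ifs with hx
      · exact (prod_le_prod (fun t _ => hp0 (x t)) fun t _ => hdom (x t)).trans_eq
          (prod_comp_eq_prod_comp_mul_two_rpow_neg_relEntropyBits hq0 hqμ hx)
      · exact mul_nonneg (prod_nonneg fun t _ => hq0 (x t)) (by positivity)
    _ = _ := by rw [← sum_mul, ← Fintype.sum_pow, hq1, one_pow, one_mul, relEntropyBits]

/-- if the measure `μX` dominates the pmf `pX` pointwise, then the iid `pX`
probability that a length-`n` sequence has empirical type `qX` is at most
`2^{-n D(qX ‖ μX)}` where `D(qX ‖ μX) = Σ_i qX(i) log₂(qX(i)/μX(i))`. -/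
theorem type_class_prob_le_of_dominating
    {X : Type} [Fintype X] [DecidableEq X] [Nonempty X]
    (pX μX qX : X → ℝ) (n : ℕ) (hn : 0 < n)
    (hp0 : ∀ i, 0 ≤ pX i) (hp1 : ∑ i, pX i = 1)
    (hμ0 : ∀ i, 0 ≤ μX i) (hdom : ∀ i, pX i ≤ μX i)
    (hq0 : ∀ i, 0 ≤ qX i) (hq1 : ∑ i, qX i = 1)
    (hqμ : ∀ i, 0 < qX i → 0 < μX i)
    (hrealizable : ∃ x : Fin n → X,
      ∀ i, ((Finset.univ.filter (fun t => x t = i)).card : ℝ) = n * qX i) :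
    ∑ x : Fin n → X,
        (if ∀ i, ((Finset.univ.filter (fun t => x t = i)).card : ℝ) = n * qX i
          then ∏ t, pX (x t) else 0)
      ≤ 2 ^ (-(n : ℝ) * ∑ i, qX i * Real.logb 2 (qX i / μX i)) :=
  type_class_prob_le_of_dominating_general pX μX qX n hp0 hdom hq0 hq1 hqμ
end

section
/- For any pmf p on a finite set X and any empirical type q of sequences of length n (i.e., n·q(i) is an integer for all i), the probability under the iid p measure that a length-n sequence has empirical type exactly q is at most 2^{-n D(q||p)}. -/
open scoped Classical

open Finset Real

/-! Every sequence of type `q` has iid probability `∏ i, p i ^ (n q i)` under `p`, so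
`Pₚ(T(q)) = |T(q)| ∏ i, p i ^ (n q i)`. Comparing factor by factor with the same expression for
`q` gives `Pₚ(T(q)) ≤ P_q(T(q)) · 2^{-n D(q‖p)}`, and `P_q(T(q)) ≤ 1`. -/

section TypeClass

variable {X : Type*} [Fintype X] [DecidableEq X] {n : ℕ}

/-- The type class `T(q)` of the type with letter counts `c i = n q i`. -/
def typeClass (n : ℕ) (c : X → ℕ) : Finset (Fin n → X) :=
  {x | ∀ i, #{t | x t = i} = c i}

lemma prod_comp_eq_prod_pow_card_fiber {M : Type*} [CommMonoid M] (f : X → M)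
    (x : Fin n → X) : ∏ t, f (x t) = ∏ i, f i ^ #{t | x t = i} := by
  rw [← prod_fiberwise' univ x f]
  exact prod_congr rfl fun i _ => prod_const _

lemma sum_typeClass_prod {R : Type*} [CommSemiring R] (f : X → R) (c : X → ℕ) :
    ∑ x ∈ typeClass n c, ∏ t, f (x t) = #(typeClass n c) * ∏ i, f i ^ c i := by
  rw [← nsmul_eq_mul, ← sum_const]
  refine sum_congr rfl fun x hx => ?_
  rw [prod_comp_eq_prod_pow_card_fiber]
  exact prod_congr rfl fun i _ => by rw [(mem_filter.mp hx).2 i]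

lemma card_typeClass_mul_prod_pow_le_one {q : X → ℝ} (hq0 : ∀ i, 0 ≤ q i)
    (hq1 : ∑ i, q i = 1) (c : X → ℕ) :
    #(typeClass n c) * ∏ i, q i ^ c i ≤ 1 :=
  calc #(typeClass n c) * ∏ i, q i ^ c i
      = ∑ x ∈ typeClass n c, ∏ t, q (x t) := (sum_typeClass_prod q c).symm
    _ ≤ ∑ x : Fin n → X, ∏ t, q (x t) :=
        sum_le_sum_of_subset_of_nonneg (subset_univ _)
          fun x _ _ => prod_nonneg fun t _ => hq0 (x t)
    _ = 1 := by rw [← Fintype.sum_pow, hq1, one_pow]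

end TypeClass

/-- Equality for `a, b > 0`; for `a = 0 < b` the right side is `b ^ k`, as `b / 0 = 0` and
`logb 2 0 = 0`. -/
lemma pow_le_pow_mul_two_rpow_neg_mul_logb {a b : ℝ} {k : ℕ} (ha : 0 ≤ a) (hb : 0 ≤ b)
    (hk : b = 0 → k = 0) : a ^ k ≤ b ^ k * 2 ^ (-(k : ℝ) * logb 2 (b / a)) := by
  rcases hb.eq_or_lt with rfl | hb
  · simp [hk rfl]
  rcases ha.eq_or_lt with rfl | ha
  · simpa using pow_le_pow_left₀ le_rfl hb.le k
  have hba : 0 < b / a := div_pos hb ha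
  rw [mul_comm (-(k : ℝ)), rpow_mul zero_le_two, rpow_logb zero_lt_two (by norm_num) hba,
    rpow_neg hba.le, rpow_natCast, ← inv_pow, inv_div, ← mul_pow, mul_div_cancel₀ _ hb.ne']

theorem type_class_prob_le_general
    {X : Type} [Fintype X] [DecidableEq X]
    (p q : X → ℝ) (n : ℕ)
    (hp0 : ∀ i, 0 ≤ p i)
    (hq0 : ∀ i, 0 ≤ q i) (hq1 : ∑ i, q i = 1)
    (htype : ∀ i, ∃ k : ℕ, (k : ℝ) = n * q i) :
    ∑ x : Fin n → X,
        (if ∀ i, ((Finset.univ.filter (fun t => x t = i)).card : ℝ) = n * q i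
          then ∏ t, p (x t) else 0)
      ≤ 2 ^ (-(n : ℝ) * ∑ i, q i * Real.logb 2 (q i / p i)) := by
  choose c hc using htype
  have hc0 : ∀ i, q i = 0 → c i = 0 := fun i h =>
    Nat.cast_eq_zero.mp (by rw [hc i, h, mul_zero])
  have hexp : -(n : ℝ) * ∑ i, q i * logb 2 (q i / p i) =
      ∑ i, -(c i : ℝ) * logb 2 (q i / p i) := by
    simp only [mul_sum, hc]; ring_nf
  calc ∑ x : Fin n → X,
        (if ∀ i, ((univ.filter (fun t => x t = i)).card : ℝ) = n * q i
          then ∏ t, p (x t) else 0)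
      = ∑ x ∈ typeClass n c, ∏ t, p (x t) := by
        simp only [← sum_filter, ← hc, Nat.cast_inj, typeClass]
    _ = #(typeClass n c) * ∏ i, p i ^ c i := sum_typeClass_prod p c
    _ ≤ #(typeClass n c) * ∏ i, (q i ^ c i * 2 ^ (-(c i : ℝ) * logb 2 (q i / p i))) := by
        gcongr with i
        · exact fun i _ => pow_nonneg (hp0 i) _
        · exact pow_le_pow_mul_two_rpow_neg_mul_logb (hp0 i) (hq0 i) (hc0 i)
    _ = (#(typeClass n c) * ∏ i, q i ^ c i) *
          2 ^ (-(n : ℝ) * ∑ i, q i * logb 2 (q i / p i)) := by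
        rw [prod_mul_distrib, hexp, rpow_sum_of_pos zero_lt_two, mul_assoc]
    _ ≤ 2 ^ (-(n : ℝ) * ∑ i, q i * logb 2 (q i / p i)) :=
        mul_le_of_le_one_left (by positivity) (card_typeClass_mul_prod_pow_le_one hq0 hq1 c)

/-- the iid `p` probability that a length-`n` sequence has empirical type
exactly `q` (a type of denominator `n`) is at most `2^{-n D(q ‖ p)}`. -/
theorem type_class_prob_le
    {X : Type} [Fintype X] [DecidableEq X] [Nonempty X]
    (p q : X → ℝ) (n : ℕ) (hn : 0 < n)
    (hp0 : ∀ i, 0 ≤ p i) (hp1 : ∑ i, p i = 1)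
    (hq0 : ∀ i, 0 ≤ q i) (hq1 : ∑ i, q i = 1)
    (hsupp : ∀ i, 0 < q i → 0 < p i)
    (htype : ∀ i, ∃ k : ℕ, (k : ℝ) = n * q i) :
    ∑ x : Fin n → X,
        (if ∀ i, ((Finset.univ.filter (fun t => x t = i)).card : ℝ) = n * q i
          then ∏ t, p (x t) else 0)
      ≤ 2 ^ (-(n : ℝ) * ∑ i, q i * Real.logb 2 (q i / p i)) :=
  type_class_prob_le_general p q n hp0 hq0 hq1 htype
end

section
/- Counterexample to reliable communication under expected distortion: let the source be iid uniform on {0,1} with Hamming distortion, and let the attacker flip one fair coin at time zero; on heads it outputs Y_t = X_t for all t, on tails it outputs Y_t = 0 for all t. Then (a) the attacker satisfies the expected distortion constraint E d(X_t, Y_t) ≤ 1/4 for every t, and (b) for any code with M ≥ 2 messages used over this channel with any block length n, the average probability of decoding error is at least (1/2)(1 − 1/M). -/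
/-- counterexample under a merely expected distortion constraint.
Source: iid uniform bits with Hamming distortion `d(x,y) = if x ≠ y then 1 else 0`.
Attacker: flips one fair coin `c`; on heads it outputs `Y_t = X_t`, on tails `Y_t = 0`
(`false`) for all `t`.
(a) For each symbol, the expected distortion (averaging over the independent fair coin
`c` and the uniform source bit `x`) is at most `1/4`.
(b) For any block code with `M ≥ 2` equiprobable messages, any blocklength `n`, any
encoder `enc` and decoder `dec`, the average probability of decoding error is at least
`(1/2)(1 - 1/M)`. -/
theorem expected_distortion_attacker_counterexample :
    (∑ c : Bool, ∑ x : Bool,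
        (1 / 4 : ℝ) * (if x ≠ (if c then x else false) then 1 else 0)) ≤ 1 / 4
    ∧ ∀ (n M : ℕ), 2 ≤ M → ∀ (enc : Fin M → Fin n → Bool)
        (dec : (Fin n → Bool) → Fin M),
        (1 / 2 : ℝ) * (1 - 1 / M) ≤
          (1 / M : ℝ) * ∑ m : Fin M,
            ((1 / 2) * (if dec (enc m) ≠ m then 1 else 0)
              + (1 / 2) * (if dec (fun _ => false) ≠ m then 1 else 0)) := by
  constructor
  · simp [Fintype.sum_bool]
  · intro n M hM enc dec
    have hMpos : (0:ℝ) < M := by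
      have : (0:ℕ) < M := by omega
      exact_mod_cast this
    set m0 := dec (fun _ => false) with hm0
    have h1 : ∑ m : Fin M, (if m0 ≠ m then (1:ℝ) else 0) = M - 1 := by
      have : ∀ m : Fin M, (if m0 ≠ m then (1:ℝ) else 0)
          = 1 - (if m0 = m then (1:ℝ) else 0) := by
        intro m; by_cases h : m0 = m <;> simp [h]
      rw [Finset.sum_congr rfl (fun m _ => this m), Finset.sum_sub_distrib,
        Finset.sum_const, Finset.sum_ite_eq, Finset.card_univ]
      simp
    have h2 : ∑ m : Fin M,
        ((1 / 2 : ℝ) * (if dec (enc m) ≠ m then 1 else 0)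
          + (1 / 2) * (if m0 ≠ m then 1 else 0))
        ≥ (1/2) * (M - 1) := by
      rw [Finset.sum_add_distrib, ← Finset.mul_sum, ← Finset.mul_sum, h1]
      have : (0:ℝ) ≤ (1/2 : ℝ) * ∑ m : Fin M, (if dec (enc m) ≠ m then (1:ℝ) else 0) := by
        exact mul_nonneg (by norm_num)
          (Finset.sum_nonneg fun m _ => by positivity)
      linarith
    have key : (1/M : ℝ) * ((1/2) * (M - 1)) = (1/2) * (1 - 1/M) := by
      field_simp
    calc (1/2 : ℝ) * (1 - 1/M) = (1/M) * ((1/2) * (M-1)) := key.symm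
      _ ≤ _ := by
          apply mul_le_mul_of_nonneg_left h2
          positivity
end
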